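/- arXiv:2505.24728 — 3 statements merged into one kernel-verified Lean document; each statement's English description precedes it below -/
import Mathlib

section
/- If F : R^d → R is L-smooth and ∇F(w) ≠ 0, then the exact sharpness max_{‖δ‖≤ρ} F(w+δ) satisfies ρ‖∇F(w)‖ - (L/2)ρ² ≤ max_{‖δ‖≤ρ} F(w+δ) - F(w) ≤ ρ‖∇F(w)‖ + (L/2)ρ². -/
open scoped RealInnerProductSpace

variable {E : Type*} [NormedAddCommGroup E] [InnerProductSpace ℝ E] [CompleteSpace E]

lemma phi_deriv (F : E → ℝ) (hdiff : Differentiable ℝ F) (w δ : E) (t : ℝ) :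
    HasDerivAt (fun t : ℝ => F (w + t • δ)) ⟪gradient F (w + t • δ), δ⟫ t := by
  have h1 : HasDerivAt (fun t : ℝ => w + t • δ) δ t := by
    simpa using ((hasDerivAt_id t).smul_const δ).const_add w
  have h2 := ((hdiff (w + t • δ)).hasGradientAt).hasFDerivAt
  simpa [InnerProductSpace.toDual_apply_apply, Function.comp_def] using h2.comp_hasDerivAt t h1

lemma descent (F : E → ℝ) (L : ℝ) (hdiff : Differentiable ℝ F)
    (hL : ∀ w v : E, ‖gradient F w - gradient F v‖ ≤ L * ‖w - v‖)
    (hL0 : 0 ≤ L) (w δ : E) :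
    |F (w + δ) - F w - ⟪gradient F w, δ⟫| ≤ L / 2 * ‖δ‖ ^ 2 := by
  set g := gradient F w with hg
  have hgradcont : Continuous (gradient F) := by
    have : LipschitzWith (Real.toNNReal L) (gradient F) := by
      refine LipschitzWith.of_dist_le_mul fun x y => ?_
      simpa [dist_eq_norm, Real.coe_toNNReal L hL0] using hL x y
    exact this.continuous
  set φ : ℝ → ℝ := fun t => F (w + t • δ) with hφ
  have hφd : ∀ t, HasDerivAt φ ⟪gradient F (w + t • δ), δ⟫ t := phi_deriv F hdiff w δ
  have hcont : Continuous fun t : ℝ => ⟪gradient F (w + t • δ), δ⟫ := by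
    exact (hgradcont.comp (by continuity)).inner continuous_const
  have hint : F (w + δ) - F w = ∫ t in (0:ℝ)..1, ⟪gradient F (w + t • δ), δ⟫ := by
    rw [intervalIntegral.integral_eq_sub_of_hasDerivAt (fun t _ => hφd t)
      (hcont.intervalIntegrable 0 1)]
    simp [φ]
  have hbound : ∀ t ∈ Set.Icc (0:ℝ) 1,
      |⟪gradient F (w + t • δ), δ⟫ - ⟪g, δ⟫| ≤ L * ‖δ‖ ^ 2 * t := by
    intro t ht
    have := hL (w + t • δ) w
    calc |⟪gradient F (w + t • δ), δ⟫ - ⟪g, δ⟫|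
        = |⟪gradient F (w + t • δ) - g, δ⟫| := by rw [← inner_sub_left]
      _ ≤ ‖gradient F (w + t • δ) - g‖ * ‖δ‖ := abs_real_inner_le_norm _ _
      _ ≤ (L * ‖t • δ‖) * ‖δ‖ := by
          refine mul_le_mul_of_nonneg_right ?_ (norm_nonneg _)
          simpa using this
      _ = L * ‖δ‖ ^ 2 * t := by
          rw [norm_smul, Real.norm_eq_abs, abs_of_nonneg ht.1]; ring
  have key : F (w + δ) - F w - ⟪g, δ⟫ = ∫ t in (0:ℝ)..1, (⟪gradient F (w + t • δ), δ⟫ - ⟪g, δ⟫) := by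
    rw [intervalIntegral.integral_sub (hcont.intervalIntegrable 0 1)
      (intervalIntegrable_const), hint]
    simp
  rw [key]
  have := intervalIntegral.norm_integral_le_abs_of_norm_le
    (f := fun t => ⟪gradient F (w + t • δ), δ⟫ - ⟪g, δ⟫)
    (g := fun t => L * ‖δ‖ ^ 2 * t) (μ := MeasureTheory.volume)
    (by
      filter_upwards [MeasureTheory.ae_restrict_mem measurableSet_Ioc] with t ht
      rw [Set.uIoc_of_le (by norm_num : (0:ℝ) ≤ 1)] at ht
      simpa [Real.norm_eq_abs] using hbound t ⟨le_of_lt ht.1, ht.2⟩)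
    (by exact ((continuous_const.mul continuous_id).intervalIntegrable 0 1))
  simp only [Real.norm_eq_abs] at this
  calc |∫ t in (0:ℝ)..1, (⟪gradient F (w + t • δ), δ⟫ - ⟪g, δ⟫)| ≤ _ := this
    _ = L / 2 * ‖δ‖ ^ 2 := by
        rw [intervalIntegral.integral_const_mul, integral_id,
          abs_of_nonneg (by positivity)]
        ring
theorem sharpness_two_sided_bound (d : ℕ) (F : EuclideanSpace ℝ (Fin d) → ℝ) (L ρ : ℝ)
    (hρ : 0 < ρ)
    (hdiff : Differentiable ℝ F)
    (hL : ∀ w v : EuclideanSpace ℝ (Fin d), ‖gradient F w - gradient F v‖ ≤ L * ‖w - v‖)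
    (w : EuclideanSpace ℝ (Fin d)) (hw : gradient F w ≠ 0) :
    ∃ M : ℝ, IsGreatest ((fun δ => F (w + δ)) '' Metric.closedBall 0 ρ) M ∧
      ρ * ‖gradient F w‖ - (L / 2) * ρ ^ 2 ≤ M - F w ∧
      M - F w ≤ ρ * ‖gradient F w‖ + (L / 2) * ρ ^ 2 := by
  set g := gradient F w with hgdef
  have hgn : 0 < ‖g‖ := norm_pos_iff.mpr hw
  have hL0 : 0 ≤ L := by
    have h1 := hL (w + g) w
    have h2 : (0:ℝ) ≤ L * ‖g‖ := le_trans (norm_nonneg _) (by simpa using h1)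
    exact nonneg_of_mul_nonneg_right (by linarith [mul_comm L ‖g‖]) hgn
  have hdesc := descent F L hdiff hL hL0 w
  -- existence of the maximum
  have hcompact : IsCompact ((fun δ => F (w + δ)) '' Metric.closedBall (0:EuclideanSpace ℝ (Fin d)) ρ) := by
    exact (isCompact_closedBall 0 ρ).image
      (hdiff.continuous.comp (continuous_const.add continuous_id))
  have hne : ((fun δ => F (w + δ)) '' Metric.closedBall (0:EuclideanSpace ℝ (Fin d)) ρ).Nonempty :=
    ⟨F (w + 0), Set.mem_image_of_mem _ (Metric.mem_closedBall_self hρ.le)⟩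
  obtain ⟨M, hM⟩ := hcompact.exists_isGreatest hne
  refine ⟨M, hM, ?_, ?_⟩
  · -- lower bound: test point δ₀ = (ρ/‖g‖) • g
    set δ₀ : EuclideanSpace ℝ (Fin d) := (ρ / ‖g‖) • g with hδ₀
    have hδ₀norm : ‖δ₀‖ = ρ := by
      rw [hδ₀, norm_smul, Real.norm_eq_abs, abs_of_pos (div_pos hρ hgn),
        div_mul_cancel₀ _ hgn.ne']
    have hmem : δ₀ ∈ Metric.closedBall (0:EuclideanSpace ℝ (Fin d)) ρ := by
      simp [Metric.mem_closedBall, dist_eq_norm, hδ₀norm]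
    have hMl : F (w + δ₀) ≤ M := hM.2 (Set.mem_image_of_mem _ hmem)
    have hinner : ⟪g, δ₀⟫ = ρ * ‖g‖ := by
      rw [hδ₀, real_inner_smul_right, real_inner_self_eq_norm_sq]
      field_simp
    have h := (abs_le.mp (hdesc δ₀)).1
    rw [hδ₀norm] at h
    rw [hinner] at h
    linarith
  · -- upper bound
    obtain ⟨δ, hδmem, hδeq⟩ := hM.1
    have hδn : ‖δ‖ ≤ ρ := by simpa [dist_eq_norm] using hδmem
    have h := (abs_le.mp (hdesc δ)).2
    have hi : ⟪g, δ⟫ ≤ ρ * ‖g‖ := by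
      calc ⟪g, δ⟫ ≤ ‖g‖ * ‖δ‖ := real_inner_le_norm g δ
        _ ≤ ‖g‖ * ρ := mul_le_mul_of_nonneg_left hδn (norm_nonneg g)
        _ = ρ * ‖g‖ := mul_comm _ _
    have hsq : ‖δ‖ ^ 2 ≤ ρ ^ 2 := by
      have := sq_le_sq' (by linarith [norm_nonneg δ]) hδn
      simpa using this
    have : F (w + δ) - F w ≤ ρ * ‖g‖ + L / 2 * ρ ^ 2 := by nlinarith
    rw [← hδeq]
    linarith
end

section
/- Let F : R^d → R be L-smooth and bounded below by F*. Consider the SAM-gradient iteration w_{r+1} = w_r - η ∇F(ŵ_r) with ŵ_r = w_r + ρ ∇F(w_r)/‖∇F(w_r)‖ (assume ∇F(w_r) ≠ 0 for all r), η ≤ 1/(2L). Then (1/R) Σ_{r=0}^{R-1} ‖∇F(w_r)‖² ≤ (4/(ηR))(F(w₀) - F*) + 4L²ρ². -/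
open InnerProductSpace Finset

lemma sam_descent (d : ℕ) (F : EuclideanSpace ℝ (Fin d) → ℝ) (L : ℝ) (hL : 0 ≤ L)
    (hdiff : Differentiable ℝ F)
    (hLip : ∀ w v : EuclideanSpace ℝ (Fin d), ‖gradient F w - gradient F v‖ ≤ L * ‖w - v‖)
    (x y : EuclideanSpace ℝ (Fin d)) :
    F y ≤ F x + inner ℝ (gradient F x) (y - x) + L * ‖y - x‖ ^ 2 := by
  set a := gradient F x with ha
  set G : EuclideanSpace ℝ (Fin d) → ℝ := fun z => F z - innerSL ℝ a z with hG
  have hsl : ∀ b : EuclideanSpace ℝ (Fin d),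
      (innerSL ℝ b : EuclideanSpace ℝ (Fin d) →L[ℝ] ℝ) = toDual ℝ _ b := by
    intro b; ext y; simp [toDual_apply_apply]
  have hGdiff : Differentiable ℝ G := hdiff.sub (innerSL ℝ a).differentiable
  have hfd : ∀ z, fderiv ℝ G z = fderiv ℝ F z - innerSL ℝ a := by
    intro z
    rw [hG]
    rw [fderiv_fun_sub (hdiff z) ((innerSL ℝ a).differentiable z)]
    congr 1
    exact (innerSL ℝ a).fderiv
  have hfdF : ∀ z, fderiv ℝ F z = toDual ℝ _ (gradient F z) := by
    intro z; rw [gradient]; exact ((toDual ℝ _).apply_symm_apply _).symm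
  have hbound : ∀ z ∈ segment ℝ x y, ‖fderiv ℝ G z‖ ≤ L * ‖y - x‖ := by
    intro z hz
    rw [hfd z, hfdF z, hsl a]
    have : toDual ℝ (EuclideanSpace ℝ (Fin d)) (gradient F z) - toDual ℝ _ a
        = toDual ℝ _ (gradient F z - a) := by simp
    rw [this, (toDual ℝ _).norm_map]
    calc ‖gradient F z - a‖ ≤ L * ‖z - x‖ := hLip z x
      _ ≤ L * ‖y - x‖ := by
          apply mul_le_mul_of_nonneg_left _ hL
          obtain ⟨s, t, hs, ht, hst, hz⟩ := hz
          have : z - x = t • (y - x) := by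
            rw [← hz]
            have hs' : s = 1 - t := by linarith
            rw [hs']
            module
          rw [this, norm_smul]
          have : ‖y - x‖ ≤ 1 * ‖y - x‖ := by ring_nf; exact le_rfl
          have ht1 : t ≤ 1 := by linarith
          calc ‖t‖ * ‖y - x‖ = t * ‖y - x‖ := by rw [Real.norm_of_nonneg ht]
            _ ≤ 1 * ‖y - x‖ := mul_le_mul_of_nonneg_right ht1 (norm_nonneg _)
            _ = ‖y - x‖ := one_mul _
  have key : ‖G y - G x‖ ≤ L * ‖y - x‖ * ‖y - x‖ :=
    (convex_segment x y).norm_image_sub_le_of_norm_fderiv_le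
      (fun z _ => hGdiff z) hbound (left_mem_segment ℝ x y) (right_mem_segment ℝ x y)
  have hGval : G y - G x = F y - F x - inner ℝ a (y - x) := by
    simp only [hG, innerSL_apply_apply, inner_sub_right]; ring
  have := le_trans (le_abs_self (G y - G x)) key
  rw [hGval] at this
  nlinarith [norm_nonneg (y - x)]

lemma sam_aux1 (η S A B C : ℝ) (hη : 0 < η) (h : η / 2 * S ≤ A + C * (η / 2 * B)) :
    S ≤ 2 / η * A + C * B := by
  have h2 := mul_le_mul_of_nonneg_left h (by positivity : (0:ℝ) ≤ 2 / η)
  have e1 : 2 / η * (η / 2 * S) = S := by field_simp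
  have e2 : 2 / η * (A + C * (η / 2 * B)) = 2 / η * A + C * B := by field_simp
  linarith [e1 ▸ e2 ▸ h2]

lemma sam_aux2 (η A B C : ℝ) (hη : 0 < η) (hC : 0 < C) :
    (1 / C) * (2 / η * A + C * B) = 2 / (η * C) * A + B := by
  field_simp [hη.ne', hC.ne']

set_option maxHeartbeats 1000000 in
theorem sam_convergence (d : ℕ) (F : EuclideanSpace ℝ (Fin d) → ℝ) (L ρ η Fstar : ℝ)
    (hL : 0 < L) (hρ : 0 < ρ) (hη : 0 < η) (hηL : η ≤ 1 / (2 * L))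
    (hdiff : Differentiable ℝ F)
    (hLip : ∀ w v : EuclideanSpace ℝ (Fin d), ‖gradient F w - gradient F v‖ ≤ L * ‖w - v‖)
    (hbd : ∀ v, Fstar ≤ F v)
    (w : ℕ → EuclideanSpace ℝ (Fin d))
    (hgrad : ∀ r, gradient F (w r) ≠ 0)
    (hiter : ∀ r, w (r + 1) =
      w r - η • gradient F (w r + (ρ / ‖gradient F (w r)‖) • gradient F (w r)))
    (R : ℕ) (hR : 0 < R) :
    (1 / (R : ℝ)) * ∑ r ∈ Finset.range R, ‖gradient F (w r)‖ ^ 2 ≤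
      (4 / (η * R)) * (F (w 0) - Fstar) + 4 * L ^ 2 * ρ ^ 2 := by
  -- per-step decrease
  have step : ∀ r, F (w (r + 1)) ≤ F (w r) + η / 2 * (L ^ 2 * ρ ^ 2 - ‖gradient F (w r)‖ ^ 2) := by
    intro r
    set g := gradient F (w r) with hg
    set what := w r + (ρ / ‖g‖) • g with hwhat
    set gh := gradient F what with hgh
    have hdelta : w (r + 1) - w r = -(η • gh) := by rw [hiter r]; abel
    have hdescent := sam_descent d F L hL.le hdiff hLip (w r) (w (r + 1))
    rw [hdelta] at hdescent
    have hinner : inner ℝ g (-(η • gh)) = -(η * inner ℝ g gh) := by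
      rw [inner_neg_right, inner_smul_right]
    have hnorm : ‖-(η • gh)‖ ^ 2 = η ^ 2 * ‖gh‖ ^ 2 := by
      rw [norm_neg, norm_smul, Real.norm_of_nonneg hη.le]; ring
    rw [hinner, hnorm] at hdescent
    -- ‖gh - g‖ ≤ L ρ
    have hpert : ‖gh - g‖ ≤ L * ρ := by
      have := hLip what (w r)
      have hws : what - w r = (ρ / ‖g‖) • g := by rw [hwhat]; abel
      rw [hws, norm_smul, Real.norm_of_nonneg (by positivity : (0:ℝ) ≤ ρ / ‖g‖)] at this
      have hgn : ‖g‖ ≠ 0 := norm_ne_zero_iff.mpr (hgrad r)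
      rw [div_mul_cancel₀ ρ hgn] at this
      exact this
    have hsq : ‖gh - g‖ ^ 2 ≤ L ^ 2 * ρ ^ 2 := by
      nlinarith [norm_nonneg (gh - g)]
    have hexp : ‖gh - g‖ ^ 2 = ‖gh‖ ^ 2 - 2 * inner ℝ g gh + ‖g‖ ^ 2 := by
      rw [← real_inner_self_eq_norm_sq, inner_sub_sub_self]
      rw [real_inner_self_eq_norm_sq, real_inner_self_eq_norm_sq, real_inner_comm]
      ring
    have hLη : L * η ≤ 1 / 2 := by
      calc L * η ≤ L * (1 / (2 * L)) := mul_le_mul_of_nonneg_left hηL hL.le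
        _ = 1 / 2 := by field_simp
    have hLη2 : L * η ^ 2 ≤ η / 2 := by nlinarith
    nlinarith [sq_nonneg ‖gh‖]
  -- telescoping sum
  have tele : ∀ N : ℕ, η / 2 * ∑ r ∈ Finset.range N, ‖gradient F (w r)‖ ^ 2 ≤
      F (w 0) - F (w N) + N * (η / 2 * (L ^ 2 * ρ ^ 2)) := by
    intro N
    induction N with
    | zero => simp
    | succ n ih =>
      rw [Finset.sum_range_succ, mul_add]
      have := step n
      push_cast
      nlinarith
  set S := ∑ r ∈ Finset.range R, ‖gradient F (w r)‖ ^ 2 with hS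
  clear_value S
  have hsum := tele R
  rw [← hS] at hsum
  have hFb : F (w 0) - F (w R) ≤ F (w 0) - Fstar := by linarith [hbd (w R)]
  have hRpos : (0:ℝ) < R := by exact_mod_cast hR
  have hFnn : 0 ≤ F (w 0) - Fstar := by linarith [hbd (w 0)]
  have hsum2 : S ≤
      (2 / η) * (F (w 0) - Fstar) + R * (L ^ 2 * ρ ^ 2) := by
    exact sam_aux1 η S (F (w 0) - Fstar) (L ^ 2 * ρ ^ 2) R hη (by linarith)
  have := mul_le_mul_of_nonneg_left hsum2 (by positivity : (0:ℝ) ≤ 1 / R)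
  calc (1 / (R : ℝ)) * S
      ≤ (1 / R) * ((2 / η) * (F (w 0) - Fstar) + R * (L ^ 2 * ρ ^ 2)) := this
    _ = (2 / (η * R)) * (F (w 0) - Fstar) + L ^ 2 * ρ ^ 2 :=
          sam_aux2 η (F (w 0) - Fstar) (L ^ 2 * ρ ^ 2) R hη hRpos
    _ ≤ (4 / (η * R)) * (F (w 0) - Fstar) + 4 * L ^ 2 * ρ ^ 2 := by
        have h1 : (2 / (η * R)) * (F (w 0) - Fstar) ≤ (4 / (η * R)) * (F (w 0) - Fstar) := by
          apply mul_le_mul_of_nonneg_right _ hFnn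
          apply div_le_div_of_nonneg_right (by norm_num) (by positivity)
        nlinarith [sq_nonneg L, sq_nonneg ρ, mul_pos (mul_pos hL hL) (mul_pos hρ hρ)]
end

section
/- If F : R^d → R is L-smooth, then for any w with ∇F(w) ≠ 0 and ŵ = w + ρ∇F(w)/‖∇F(w)‖, the inner product satisfies ⟨∇F(w), ∇F(ŵ)⟩ ≥ ‖∇F(w)‖² − Lρ‖∇F(w)‖ ≥ (1/2)‖∇F(w)‖² − (1/2)L²ρ². -/
open scoped RealInnerProductSpace

theorem sam_inner_product_bound (d : ℕ) (F : EuclideanSpace ℝ (Fin d) → ℝ) (L ρ : ℝ)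
    (hρ : 0 < ρ)
    (hdiff : Differentiable ℝ F)
    (hLip : ∀ w v : EuclideanSpace ℝ (Fin d), ‖gradient F w - gradient F v‖ ≤ L * ‖w - v‖)
    (w : EuclideanSpace ℝ (Fin d)) (hw : gradient F w ≠ 0) :
    ⟪gradient F w, gradient F (w + (ρ / ‖gradient F w‖) • gradient F w)⟫ ≥
        ‖gradient F w‖ ^ 2 - L * ρ * ‖gradient F w‖ ∧
    ‖gradient F w‖ ^ 2 - L * ρ * ‖gradient F w‖ ≥
        (1 / 2) * ‖gradient F w‖ ^ 2 - (1 / 2) * L ^ 2 * ρ ^ 2 := by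
  set g := gradient F w with hg
  have hgnorm : (0 : ℝ) < ‖g‖ := norm_pos_iff.mpr hw
  set v := w + (ρ / ‖g‖) • g with hv
  have hdist : ‖v - w‖ = ρ := by
    have : v - w = (ρ / ‖g‖) • g := by simp [hv]
    rw [this, norm_smul]
    rw [Real.norm_eq_abs, abs_of_pos (div_pos hρ hgnorm)]
    field_simp
  have hL : 0 ≤ L := by
    have h := hLip (w + g) w
    have : ‖(w + g) - w‖ = ‖g‖ := by simp
    rw [this] at h
    nlinarith [norm_nonneg (gradient F (w + g) - gradient F w)]
  have hlip : ‖gradient F v - g‖ ≤ L * ρ := by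
    have := hLip v w
    rwa [hdist] at this
  have key : ⟪g, gradient F v⟫ ≥ ‖g‖ ^ 2 - L * ρ * ‖g‖ := by
    have h1 : ⟪g, gradient F v⟫ = ‖g‖ ^ 2 + ⟪g, gradient F v - g⟫ := by
      rw [inner_sub_right, real_inner_self_eq_norm_sq]; ring
    have h2 : |⟪g, gradient F v - g⟫| ≤ ‖g‖ * (L * ρ) := by
      calc |⟪g, gradient F v - g⟫| ≤ ‖g‖ * ‖gradient F v - g‖ := abs_real_inner_le_norm _ _
        _ ≤ ‖g‖ * (L * ρ) := by
            exact mul_le_mul_of_nonneg_left hlip (norm_nonneg _)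
    have := abs_le.mp h2
    rw [h1]; nlinarith
  refine ⟨key, ?_⟩
  nlinarith [sq_nonneg (‖g‖ - L * ρ)]
end
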